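/- arXiv:2002.05999 — 2 statements merged into one kernel-verified Lean document; each statement's English description precedes it below -/
import Mathlib

section
/- Consider the one-dimensional density p(δ) = (1/(√(2π)σ)) exp(−r²/2) · 1/(1 − tanh(μ+σr)²) · 1/ε where r satisfies ε·tanh(μ+σr) = δ. If |μ| ≤ κ_μ and κ_σ^lo ≤ σ ≤ κ_σ^up with κ_σ^lo > 0, then p(δ) ≤ (1/(4√(2π) κ_σ^lo ε)) · [2 exp(2(κ_σ^up)² + 2κ_μ) + 2] for all δ ∈ (−ε, ε). -/
/-!
Since `1 / (1 - tanh x ^ 2) = cosh x ^ 2 = (exp (2x) + 2 + exp (-2x)) / 4`, the density is a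
multiple of `exp (-r ^ 2 / 2 + 2x) + 2 exp (-r ^ 2 / 2) + exp (-r ^ 2 / 2 - 2x)` with `x = μ + σ r`.
Completing the square in `r` bounds the outer terms by `exp (2 σ ^ 2 + 2 |μ|)` and the middle one
by `2`, uniformly in `r`; the bound is monotone in `σ` and `|μ|`.
-/

open Real

namespace Real

theorem one_div_one_sub_tanh_sq (x : ℝ) : 1 / (1 - tanh x ^ 2) = cosh x ^ 2 := by
  rw [tanh_eq_sinh_div_cosh, div_pow, one_sub_div (pow_pos (cosh_pos x) 2).ne',
    cosh_sq_sub_sinh_sq, one_div_div, div_one]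

theorem cosh_sq_eq_exp (x : ℝ) : cosh x ^ 2 = (exp (2 * x) + 2 + exp (-(2 * x))) / 4 := by
  rw [cosh_eq, two_mul, neg_add, exp_add, exp_add, exp_neg]
  field_simp
  ring

theorem neg_sq_div_two_add_mul_le (r a : ℝ) : -r ^ 2 / 2 + a * r ≤ a ^ 2 / 2 := by
  nlinarith [sq_nonneg (r - a)]

theorem exp_neg_sq_div_two_mul_cosh_sq_le (μ σ r : ℝ) :
    exp (-r ^ 2 / 2) * cosh (μ + σ * r) ^ 2 ≤ (2 * exp (2 * σ ^ 2 + 2 * |μ|) + 2) / 4 := by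
  have h_plus : exp (-r ^ 2 / 2 + 2 * (μ + σ * r)) ≤ exp (2 * σ ^ 2 + 2 * |μ|) := by
    refine exp_le_exp.2 ?_
    nlinarith [neg_sq_div_two_add_mul_le r (2 * σ), le_abs_self μ]
  have h_minus : exp (-r ^ 2 / 2 + -(2 * (μ + σ * r))) ≤ exp (2 * σ ^ 2 + 2 * |μ|) := by
    refine exp_le_exp.2 ?_
    nlinarith [neg_sq_div_two_add_mul_le r (-2 * σ), neg_abs_le μ]
  have h_center : exp (-r ^ 2 / 2) ≤ 1 := exp_le_one_iff.2 (by nlinarith [sq_nonneg r])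
  calc exp (-r ^ 2 / 2) * cosh (μ + σ * r) ^ 2
      = (exp (-r ^ 2 / 2 + 2 * (μ + σ * r)) + 2 * exp (-r ^ 2 / 2)
          + exp (-r ^ 2 / 2 + -(2 * (μ + σ * r)))) / 4 := by
        rw [cosh_sq_eq_exp, exp_add, exp_add]
        ring
    _ ≤ (2 * exp (2 * σ ^ 2 + 2 * |μ|) + 2) / 4 := by linarith

end Real

/-- Boundedness of the tanh-transformed Gaussian density under parameter constraints:
for any `r` (corresponding to a point `δ = ε·tanh(μ+σr) ∈ (−ε,ε)`), if `|μ| ≤ κμ` and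
`κσlo ≤ σ ≤ κσup` with `κσlo > 0`, then
`(1/(√(2π)σ)) exp(−r²/2) · 1/(1 − tanh(μ+σr)²) · 1/ε
  ≤ (1/(4√(2π) κσlo ε)) · (2 exp(2 κσup² + 2 κμ) + 2)`. -/
theorem tanh_gaussian_density_bounded
    (ε κμ κσlo κσup : ℝ) (hε : 0 < ε) (hκσlo : 0 < κσlo)
    (μ σ r : ℝ) (hμ : |μ| ≤ κμ) (hlo : κσlo ≤ σ) (hup : σ ≤ κσup) :
    (1 / (Real.sqrt (2 * π) * σ)) * Real.exp (-r ^ 2 / 2) *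
        (1 / (1 - Real.tanh (μ + σ * r) ^ 2)) * (1 / ε) ≤
      (1 / (4 * Real.sqrt (2 * π) * κσlo * ε)) *
        (2 * Real.exp (2 * κσup ^ 2 + 2 * κμ) + 2) := by
  have hσ : 0 < σ := hκσlo.trans_le hlo
  calc (1 / (√(2 * π) * σ)) * exp (-r ^ 2 / 2) * (1 / (1 - tanh (μ + σ * r) ^ 2)) * (1 / ε)
      = exp (-r ^ 2 / 2) * cosh (μ + σ * r) ^ 2 / (√(2 * π) * σ * ε) := by
        rw [one_div_one_sub_tanh_sq]
        field_simp
    _ ≤ (2 * exp (2 * σ ^ 2 + 2 * |μ|) + 2) / 4 / (√(2 * π) * σ * ε) := by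
        gcongr
        exact exp_neg_sq_div_two_mul_cosh_sq_le μ σ r
    _ ≤ (2 * exp (2 * κσup ^ 2 + 2 * κμ) + 2) / 4 / (√(2 * π) * κσlo * ε) := by
        gcongr
    _ = (1 / (4 * √(2 * π) * κσlo * ε)) * (2 * exp (2 * κσup ^ 2 + 2 * κμ) + 2) := by
        ring
end

section
/- For the one-dimensional family of densities p_{μ,σ} of δ = ε·tanh(μ + σr), r ∼ N(0,1), with parameters constrained to |μ| ≤ κ_μ and 0 < κ_σ^lo ≤ σ ≤ κ_σ^up, the derivative p'_{μ,σ}(δ) is uniformly bounded in δ ∈ (−ε, ε) by a constant depending only on ε, κ_μ, κ_σ^lo, κ_σ^up; hence the family {p_{μ,σ}} is uniformly Lipschitz and therefore equicontinuous. -/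
/-!
With `φ` the standard normal density and `δ = ε tanh t`, the density is
`φ((t - μ)/σ) / σ · cosh² t / ε` and its derivative in `δ` is
`φ((t - μ)/σ) / σ · cosh⁴ t / ε² · (2 tanh t - (t - μ)/σ²)`. With `u = |t - μ|` we have
`cosh t ≤ exp (|μ| + u)`, so the derivative is at most
`(2 + σ⁻²)/(σ ε²) · exp (4|μ|) · exp (5u - u²/(2σ²))`, and the Gaussian factor wins against the
exponential one: `5u - u²/(2σ²) ≤ 25σ²/2`. The mean value theorem on the convex interval `(-ε, ε)`
turns the derivative bound into the Lipschitz bound.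
-/

open Real Set

/-- The inverse hyperbolic tangent, as the inverse function of `Real.tanh`. -/
noncomputable def artanh (x : ℝ) : ℝ := Function.invFun Real.tanh x

theorem artanh_eq_real_artanh {x : ℝ} (hx : x ∈ Ioo (-1) 1) : _root_.artanh x = Real.artanh x := by
  conv_lhs => rw [← Real.tanh_artanh hx]
  exact Function.leftInverse_invFun Real.tanh_injective _

theorem Real.hasDerivAt_artanh {x : ℝ} (hx : x ∈ Ioo (-1) 1) :
    HasDerivAt Real.artanh (1 - x ^ 2)⁻¹ x := by
  have h₁ : 0 < 1 + x := by linarith [hx.1]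
  have h₂ : 0 < 1 - x := by linarith [hx.2]
  have hlog : HasDerivAt (fun y => 1 / 2 * log ((1 + y) / (1 - y)))
      (1 / 2 * ((1 * (1 - x) - (1 + x) * -1) / (1 - x) ^ 2 / ((1 + x) / (1 - x)))) x :=
    ((((hasDerivAt_id x).const_add 1).div ((hasDerivAt_id x).const_sub 1) h₂.ne').log
      (div_pos h₁ h₂).ne').const_mul _
  refine (hlog.congr_deriv ?_).congr_of_eventuallyEq ?_
  · have : 1 - x ^ 2 ≠ 0 := by nlinarith
    field_simp
    ring
  · filter_upwards [isOpen_Ioo.mem_nhds hx] with y hy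
    exact Real.artanh_eq_half_log (Ioo_subset_Icc_self hy)

theorem Real.cosh_le_exp_abs (x : ℝ) : cosh x ≤ exp |x| := by
  rw [cosh_eq]
  have := exp_le_exp.mpr (le_abs_self x)
  have := exp_le_exp.mpr (neg_le_abs x)
  linarith

theorem mul_sub_sq_div_le {σ : ℝ} (hσ : σ ≠ 0) (a u : ℝ) :
    a * u - u ^ 2 / (2 * σ ^ 2) ≤ a ^ 2 * σ ^ 2 / 2 := by
  have : 0 < 2 * σ ^ 2 := by positivity
  rw [sub_le_iff_le_add, ← sub_le_iff_le_add', le_div_iff₀ this]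
  nlinarith [sq_nonneg (u - a * σ ^ 2)]

theorem div_mem_Ioo_neg_one_one {ε δ : ℝ} (hε : 0 < ε) (hδ : δ ∈ Ioo (-ε) ε) :
    δ / ε ∈ Ioo (-1) 1 := by
  rw [mem_Ioo, lt_div_iff₀ hε, div_lt_one hε]
  exact ⟨by linarith [hδ.1], hδ.2⟩

noncomputable def tanhGaussianDensity (ε μ σ δ : ℝ) : ℝ :=
  1 / (√(2 * π) * σ) * exp (-((Real.artanh (δ / ε) - μ) / σ) ^ 2 / 2) * (ε / (ε ^ 2 - δ ^ 2))

/-- The derivative of `tanhGaussianDensity ε μ σ` at `δ = ε * tanh t`, as a function of `t`. -/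
noncomputable def tanhGaussianDensityDeriv (ε μ σ t : ℝ) : ℝ :=
  1 / (√(2 * π) * σ) * exp (-((t - μ) / σ) ^ 2 / 2) * (cosh t ^ 2 / ε) ^ 2 *
    (2 * tanh t - (t - μ) / σ ^ 2)

theorem hasDerivAt_tanhGaussianDensity {ε δ : ℝ} (μ : ℝ) {σ : ℝ} (hε : 0 < ε) (hσ : σ ≠ 0)
    (hδ : δ ∈ Ioo (-ε) ε) :
    HasDerivAt (tanhGaussianDensity ε μ σ)
      (tanhGaussianDensityDeriv ε μ σ (Real.artanh (δ / ε))) δ := by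
  have hx := div_mem_Ioo_neg_one_one hε hδ
  have hx₂ : 0 < 1 - (δ / ε) ^ 2 := by nlinarith [hx.1, hx.2]
  have hden : 0 < ε ^ 2 - δ ^ 2 := by nlinarith [hδ.1, hδ.2]
  have hcosh : cosh (Real.artanh (δ / ε)) ^ 2 = (1 - (δ / ε) ^ 2)⁻¹ := by
    rw [Real.cosh_artanh hx, div_pow, sq_sqrt hx₂.le, one_pow, one_div]
  have hartanh : HasDerivAt (fun y => Real.artanh (y / ε)) ((1 - (δ / ε) ^ 2)⁻¹ * (1 / ε)) δ :=
    (Real.hasDerivAt_artanh hx).comp (h₂ := Real.artanh) δ ((hasDerivAt_id' δ).div_const ε)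
  have hexp : HasDerivAt (fun y => exp (-((Real.artanh (y / ε) - μ) / σ) ^ 2 / 2)) _ δ :=
    ((((hartanh.sub_const μ).div_const σ).pow 2).neg.div_const 2).exp
  have hjac : HasDerivAt (fun y => ε / (ε ^ 2 - y ^ 2)) _ δ :=
    (hasDerivAt_const δ ε).div ((hasDerivAt_pow 2 δ).const_sub (ε ^ 2)) hden.ne'
  refine ((hexp.const_mul (1 / (√(2 * π) * σ))).mul hjac).congr_deriv ?_
  rw [tanhGaussianDensityDeriv, hcosh, Real.tanh_artanh hx]
  simp only [Pi.neg_apply, Pi.pow_apply, Nat.cast_ofNat, Nat.reduceSub, pow_one]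
  field_simp
  ring

theorem abs_tanhGaussianDensityDeriv_le (ε μ : ℝ) {σ : ℝ} (hσ : 0 < σ) (t : ℝ) :
    |tanhGaussianDensityDeriv ε μ σ t| ≤
      σ⁻¹ * (ε ^ 2)⁻¹ * (2 + (σ ^ 2)⁻¹) * exp (4 * |μ| + 25 * σ ^ 2 / 2) := by
  set u := |t - μ|
  have hu : 0 ≤ u := abs_nonneg _
  have hsqrt : 1 ≤ √(2 * π) := one_le_sqrt.mpr (by linarith [pi_gt_three])
  have hcosh : cosh t ≤ exp (|μ| + u) :=
    (cosh_le_exp_abs t).trans <| exp_le_exp.mpr <| by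
      simpa [add_comm] using abs_add_le μ (t - μ)
  have hgauss : -((t - μ) / σ) ^ 2 / 2 = -(u ^ 2 / (2 * σ ^ 2)) := by
    rw [div_pow, ← sq_abs (t - μ)]; ring
  have hslope : |2 * tanh t - (t - μ) / σ ^ 2| ≤ (2 + (σ ^ 2)⁻¹) * exp u := by
    have htanh : |tanh t| ≤ 1 := (abs_tanh_lt_one t).le
    calc |2 * tanh t - (t - μ) / σ ^ 2| ≤ |2 * tanh t| + |(t - μ) / σ ^ 2| := abs_sub _ _
      _ = 2 * |tanh t| + u * (σ ^ 2)⁻¹ := by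
          rw [abs_mul, abs_div, abs_two, abs_of_pos (pow_pos hσ 2), div_eq_mul_inv]
      _ ≤ (2 + (σ ^ 2)⁻¹) * exp u := by
          nlinarith [add_one_le_exp u, one_le_exp hu, inv_pos.mpr (pow_pos hσ 2)]
  calc |tanhGaussianDensityDeriv ε μ σ t|
      = 1 / (√(2 * π) * σ) * exp (-(u ^ 2 / (2 * σ ^ 2))) * (cosh t ^ 2) ^ 2 * (ε ^ 2)⁻¹ *
          |2 * tanh t - (t - μ) / σ ^ 2| := by
        rw [tanhGaussianDensityDeriv, hgauss, abs_mul, abs_of_nonneg (by positivity)]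
        ring
    _ ≤ σ⁻¹ * exp (-(u ^ 2 / (2 * σ ^ 2))) * (exp (|μ| + u) ^ 2) ^ 2 * (ε ^ 2)⁻¹ *
          ((2 + (σ ^ 2)⁻¹) * exp u) := by
        gcongr
        · rw [one_div]; gcongr; exact le_mul_of_one_le_left hσ.le hsqrt
    _ = σ⁻¹ * (ε ^ 2)⁻¹ * (2 + (σ ^ 2)⁻¹) * exp (4 * |μ| + (5 * u - u ^ 2 / (2 * σ ^ 2))) := by
        rw [← pow_mul, ← exp_nat_mul,
          show 4 * |μ| + (5 * u - u ^ 2 / (2 * σ ^ 2)) =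
            -(u ^ 2 / (2 * σ ^ 2)) + ((2 * 2 : ℕ) : ℝ) * (|μ| + u) + u by push_cast; ring,
          exp_add, exp_add]
        ring
    _ ≤ _ := by
        gcongr
        linarith [mul_sub_sq_div_le hσ.ne' 5 u]

theorem tanh_gaussian_density_family_uniformly_lipschitz_general
    (ε κμ κσlo κσup : ℝ) (hε : 0 < ε) (hκσlo : 0 < κσlo)
    (p : ℝ → ℝ → ℝ → ℝ)
    (hp : ∀ μ σ δ, p μ σ δ =
      (1 / (Real.sqrt (2 * π) * σ)) *
        Real.exp (-((_root_.artanh (δ / ε) - μ) / σ) ^ 2 / 2) * (ε / (ε ^ 2 - δ ^ 2))) :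
    ∃ C : ℝ, 0 ≤ C ∧
      (∀ μ σ, |μ| ≤ κμ → κσlo ≤ σ → σ ≤ κσup →
        (∀ δ ∈ Ioo (-ε) ε, |deriv (p μ σ) δ| ≤ C) ∧
        LipschitzOnWith (Real.toNNReal C) (p μ σ) (Ioo (-ε) ε)) := by
  set C := κσlo⁻¹ * (ε ^ 2)⁻¹ * (2 + (κσlo ^ 2)⁻¹) * exp (4 * κμ + 25 * κσup ^ 2 / 2) with hC
  refine ⟨C, by positivity, fun μ σ hμ hσlo hσup => ?_⟩
  have hσ : 0 < σ := hκσlo.trans_le hσlo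
  have hp_eq : EqOn (p μ σ) (tanhGaussianDensity ε μ σ) (Ioo (-ε) ε) := fun δ hδ => by
    rw [hp, tanhGaussianDensity, artanh_eq_real_artanh (div_mem_Ioo_neg_one_one hε hδ)]
  have hderiv : ∀ δ ∈ Ioo (-ε) ε,
      HasDerivAt (p μ σ) (tanhGaussianDensityDeriv ε μ σ (Real.artanh (δ / ε))) δ :=
    fun δ hδ => (hasDerivAt_tanhGaussianDensity μ hε hσ.ne' hδ).congr_of_eventuallyEq
      (hp_eq.eventuallyEq_of_mem (isOpen_Ioo.mem_nhds hδ))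
  have hbound (t : ℝ) : |tanhGaussianDensityDeriv ε μ σ t| ≤ C :=
    (abs_tanhGaussianDensityDeriv_le ε μ hσ t).trans (by rw [hC]; gcongr)
  refine ⟨fun δ hδ => (hderiv δ hδ).deriv ▸ hbound _,
    (convex_Ioo _ _).lipschitzOnWith_of_nnnorm_hasDerivWithin_le
      (fun δ hδ => (hderiv δ hδ).hasDerivWithinAt) fun δ _ => ?_⟩
  rw [← NNReal.coe_le_coe, coe_nnnorm, Real.coe_toNNReal _ (by positivity), norm_eq_abs]
  exact hbound _

/-- For the family of densities `p_{μ,σ}` of `δ = ε·tanh(μ + σr)`, `r ∼ N(0,1)`, with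
`|μ| ≤ κμ` and `0 < κσlo ≤ σ ≤ κσup`, the derivative `p'_{μ,σ}(δ)` is uniformly bounded on
`(−ε, ε)` by a constant depending only on `ε, κμ, κσlo, κσup`; hence the family is uniformly
Lipschitz and therefore equicontinuous. -/
theorem tanh_gaussian_density_family_uniformly_lipschitz
    (ε κμ κσlo κσup : ℝ) (hε : 0 < ε) (hκσlo : 0 < κσlo) (hκ : κσlo ≤ κσup)
    (p : ℝ → ℝ → ℝ → ℝ)
    (hp : ∀ μ σ δ, p μ σ δ =
      (1 / (Real.sqrt (2 * π) * σ)) *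
        Real.exp (-((_root_.artanh (δ / ε) - μ) / σ) ^ 2 / 2) * (ε / (ε ^ 2 - δ ^ 2))) :
    ∃ C : ℝ, 0 ≤ C ∧
      (∀ μ σ, |μ| ≤ κμ → κσlo ≤ σ → σ ≤ κσup →
        (∀ δ ∈ Ioo (-ε) ε, |deriv (p μ σ) δ| ≤ C) ∧
        LipschitzOnWith (Real.toNNReal C) (p μ σ) (Ioo (-ε) ε)) :=
  tanh_gaussian_density_family_uniformly_lipschitz_general ε κμ κσlo κσup hε hκσlo p hp
end
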